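/- arXiv:1512.01096 — 2 statements merged into one kernel-verified Lean document; each statement's English description precedes it below -/
import Mathlib

section
/- In the line graph of the wheel graph W_{n+1} (n ≥ 5), the n vertices corresponding to spoke edges form a clique and each has degree n+1, while each of the n vertices corresponding to rim edges has degree 4; consequently cn(L(W_{n+1})) = n and cn^c(L(W_{n+1})) = n^2. -/
open Finset

/-- The number of vertices of `G` having degree `d`. -/
def degMult {V : Type*} (G : SimpleGraph V) [Fintype V] [DecidableRel G.Adj] (d : ℕ) : ℕ :=
  (Finset.univ.filter fun v => G.degree v = d).card

/-- The curling number of a graph: the maximum multiplicity in its degree sequence. -/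
def graphCn {V : Type*} (G : SimpleGraph V) [Fintype V] [DecidableRel G.Adj] : ℕ :=
  (Finset.univ.image (fun v => G.degree v)).sup (degMult G)

/-- The compound curling number of a graph: the product of the multiplicities of the
distinct degree values. -/
def graphCnc {V : Type*} (G : SimpleGraph V) [Fintype V] [DecidableRel G.Adj] : ℕ :=
  ∏ d ∈ Finset.univ.image (fun v => G.degree v), degMult G d

instance {V : Type*} (G : SimpleGraph V) [Fintype V] [DecidableEq V] [DecidableRel G.Adj] :
    DecidableRel G.lineGraph.Adj := fun _ _ =>
  decidable_of_iff' _ SimpleGraph.lineGraph_adj_iff_exists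

/-- Generating relation of the wheel graph `W_{n+1} = C_n + K_1`: the hub `none` is
joined to every rim vertex, and rim vertex `i` is joined to rim vertex `i + 1`. -/
def wheelRel (n : ℕ) [NeZero n] : Option (Fin n) → Option (Fin n) → Prop := fun a b =>
  (a = none ∧ b ≠ none) ∨ (∃ i : Fin n, a = some i ∧ b = some (i + 1))

instance (n : ℕ) [NeZero n] : ∀ a b, Decidable (wheelRel n a b) := fun a b => by
  unfold wheelRel; infer_instance

/-- The wheel graph `W_{n+1} = C_n + K_1` on the vertex set `Option (Fin n)`,
with hub `none`. -/
def wheel (n : ℕ) [NeZero n] : SimpleGraph (Option (Fin n)) :=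
  SimpleGraph.fromRel (wheelRel n)

instance (n : ℕ) [NeZero n] : DecidableRel (wheel n).Adj := fun a b =>
  decidable_of_iff' _ (SimpleGraph.fromRel_adj (wheelRel n) a b)

/-! An edge `uv` has degree `deg u + deg v - 2` in the line graph. In the wheel the hub has
degree `n` and every rim vertex degree `3`, so the `n` spokes have line-graph degree `n + 1` and
all other edges, which join two rim vertices, have degree `4`. By the handshake lemma the wheel
has `2n` edges, so both degree classes have size `n`; as `n + 1 ≠ 4`, the degree sequence of the
line graph takes exactly these two values, giving `cn = n` and `cn^c = n · n`. -/

namespace SimpleGraph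

lemma lineGraph_adj_mk_of_ne {V : Type*} {G : SimpleGraph V} {u v w : V}
    (hv : s(u, v) ∈ G.edgeSet) (hw : s(u, w) ∈ G.edgeSet) (hvw : v ≠ w) :
    G.lineGraph.Adj ⟨s(u, v), hv⟩ ⟨s(u, w), hw⟩ :=
  lineGraph_adj_iff_exists.2 ⟨fun h => hvw (Sym2.congr_right.1 (congrArg Subtype.val h)), u,
    Sym2.mem_mk_left u v, Sym2.mem_mk_left u w⟩

section LineGraph

variable {V : Type*} [Fintype V] [DecidableEq V] {G : SimpleGraph V} [DecidableRel G.Adj]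

lemma incidenceFinset_inter_incidenceFinset_of_adj {u v : V} (h : G.Adj u v) :
    G.incidenceFinset u ∩ G.incidenceFinset v = {s(u, v)} := by
  rw [← Finset.coe_inj, Finset.coe_inter, coe_incidenceFinset, coe_incidenceFinset,
    Finset.coe_singleton, G.incidenceSet_inter_incidenceSet_of_adj h]

lemma map_neighborFinset_lineGraph {u v : V} (h : s(u, v) ∈ G.edgeSet) :
    (G.lineGraph.neighborFinset ⟨s(u, v), h⟩).map (Function.Embedding.subtype _) =
      (G.incidenceFinset u ∪ G.incidenceFinset v).erase s(u, v) := by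
  ext e
  simp only [Finset.mem_map, mem_neighborFinset, lineGraph_adj_iff_exists, Sym2.mem_iff,
    Function.Embedding.coe_subtype, Finset.mem_erase, Finset.mem_union, mem_incidenceFinset,
    incidenceSet, Set.mem_ofPred_eq]
  constructor
  · rintro ⟨e', ⟨hne, w, rfl | rfl, hw⟩, rfl⟩
    · exact ⟨fun he => hne (Subtype.ext he).symm, Or.inl ⟨e'.2, hw⟩⟩
    · exact ⟨fun he => hne (Subtype.ext he).symm, Or.inr ⟨e'.2, hw⟩⟩
  · rintro ⟨hne, ⟨he, hu⟩ | ⟨he, hv⟩⟩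
    · exact ⟨⟨e, he⟩, ⟨fun h' => hne (congrArg Subtype.val h').symm, u, Or.inl rfl, hu⟩, rfl⟩
    · exact ⟨⟨e, he⟩, ⟨fun h' => hne (congrArg Subtype.val h').symm, v, Or.inr rfl, hv⟩, rfl⟩

/-- The edge `uv` meets every other edge at `u` or at `v`, and only itself at both. -/
lemma degree_lineGraph_mk_add_two {u v : V} (h : s(u, v) ∈ G.edgeSet) :
    G.lineGraph.degree ⟨s(u, v), h⟩ + 2 = G.degree u + G.degree v := by
  have hmem : s(u, v) ∈ G.incidenceFinset u ∪ G.incidenceFinset v :=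
    Finset.mem_union_left _ ((G.mem_incidenceFinset _ _).2 (G.mk'_mem_incidenceSet_left_iff.2 h))
  have hunion := Finset.card_union_add_card_inter (G.incidenceFinset u) (G.incidenceFinset v)
  rw [incidenceFinset_inter_incidenceFinset_of_adj h, card_incidenceFinset_eq_degree,
    card_incidenceFinset_eq_degree, Finset.card_singleton] at hunion
  rw [← card_neighborFinset_eq_degree, ← Finset.card_map (Function.Embedding.subtype _),
    map_neighborFinset_lineGraph h, Finset.card_erase_of_mem hmem]
  have := Finset.card_pos.2 ⟨_, hmem⟩
  omega

end LineGraph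

end SimpleGraph

section TwoDegreeClasses

variable {V : Type*} [Fintype V] (G : SimpleGraph V) [DecidableRel G.Adj]

lemma degMult_eq_card {d : ℕ} (s : Finset V) (hs : ∀ v, G.degree v = d ↔ v ∈ s) :
    degMult G d = #s := by
  rw [degMult]
  congr 1
  ext v
  simp [hs]

variable {s : Finset V} {a b : ℕ}

lemma degMult_left_of_two_degrees (ha : ∀ v ∈ s, G.degree v = a) (hb : ∀ v ∉ s, G.degree v = b)
    (hab : a ≠ b) : degMult G a = #s :=
  degMult_eq_card G s fun v => ⟨fun hv => by_contra fun h => hab (hv.symm.trans (hb v h)), ha v⟩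

variable [DecidableEq V]

lemma image_degree_of_two_degrees (ha : ∀ v ∈ s, G.degree v = a) (hb : ∀ v ∉ s, G.degree v = b)
    (hs : s.Nonempty) (hsc : sᶜ.Nonempty) :
    Finset.univ.image (fun v => G.degree v) = {a, b} := by
  obtain ⟨x, hx⟩ := hs
  obtain ⟨y, hy⟩ := hsc
  rw [Finset.mem_compl] at hy
  ext d
  simp only [Finset.mem_image, Finset.mem_univ, true_and, Finset.mem_insert,
    Finset.mem_singleton]
  constructor
  · rintro ⟨v, rfl⟩
    by_cases hv : v ∈ s
    · exact Or.inl (ha v hv)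
    · exact Or.inr (hb v hv)
  · rintro (rfl | rfl)
    exacts [⟨x, ha x hx⟩, ⟨y, hb y hy⟩]

lemma degMult_right_of_two_degrees (ha : ∀ v ∈ s, G.degree v = a) (hb : ∀ v ∉ s, G.degree v = b)
    (hab : a ≠ b) : degMult G b = #sᶜ :=
  degMult_eq_card G sᶜ fun v => by
    rw [Finset.mem_compl]
    exact ⟨fun hv h => hab ((ha v h).symm.trans hv), hb v⟩

theorem graphCn_of_two_degrees (ha : ∀ v ∈ s, G.degree v = a) (hb : ∀ v ∉ s, G.degree v = b)
    (hab : a ≠ b) (hs : s.Nonempty) (hsc : sᶜ.Nonempty) : graphCn G = max #s #sᶜ := by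
  rw [graphCn, image_degree_of_two_degrees G ha hb hs hsc, Finset.sup_insert, Finset.sup_singleton,
    degMult_left_of_two_degrees G ha hb hab, degMult_right_of_two_degrees G ha hb hab]

theorem graphCnc_of_two_degrees (ha : ∀ v ∈ s, G.degree v = a) (hb : ∀ v ∉ s, G.degree v = b)
    (hab : a ≠ b) (hs : s.Nonempty) (hsc : sᶜ.Nonempty) : graphCnc G = #s * #sᶜ := by
  rw [graphCnc, image_degree_of_two_degrees G ha hb hs hsc, Finset.prod_pair hab,
    degMult_left_of_two_degrees G ha hb hab, degMult_right_of_two_degrees G ha hb hab]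

end TwoDegreeClasses

namespace Fin

variable {n : ℕ} [NeZero n]

lemma add_one_ne_self (hn : 2 ≤ n) (i : Fin n) : i + 1 ≠ i := by
  rw [Ne, add_eq_left, Fin.ext_iff, Fin.val_one', Fin.val_zero, Nat.mod_eq_of_lt (by omega)]
  omega

lemma add_one_ne_sub_one (hn : 3 ≤ n) (i : Fin n) : i + 1 ≠ i - 1 := by
  rw [Ne, eq_sub_iff_add_eq, add_assoc, add_eq_left, Fin.ext_iff, Fin.val_add, Fin.val_one',
    Fin.val_zero, Nat.mod_eq_of_lt (by omega : 1 < n), Nat.mod_eq_of_lt (by omega)]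
  omega

end Fin

namespace Wheel

open SimpleGraph

variable {n : ℕ} [NeZero n]

lemma adj_none_iff {b : Option (Fin n)} : (wheel n).Adj none b ↔ b ≠ none := by
  cases b <;> simp [wheel, wheelRel]

lemma adj_some_some_iff (hn : 2 ≤ n) {i j : Fin n} :
    (wheel n).Adj (some i) (some j) ↔ j = i + 1 ∨ j = i - 1 := by
  simp only [wheel, fromRel_adj, wheelRel, ne_eq, reduceCtorEq, false_and, Option.some.injEq,
    exists_eq_left', false_or]
  rw [eq_sub_iff_add_eq, eq_comm (a := j + 1)]
  refine ⟨And.right, fun h => ⟨?_, h⟩⟩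
  rintro rfl
  rcases h with h | h <;> exact i.add_one_ne_self hn h.symm

lemma neighborFinset_some (hn : 2 ≤ n) (i : Fin n) :
    (wheel n).neighborFinset (some i) = {none, some (i + 1), some (i - 1)} := by
  ext b
  cases b with
  | none => simp [(wheel n).adj_comm, adj_none_iff]
  | some j => simp [adj_some_some_iff hn]

lemma degree_none : (wheel n).degree none = n := by
  rw [← card_neighborFinset_eq_degree, show (wheel n).neighborFinset none = {none}ᶜ by
    ext b; simp [adj_none_iff], Finset.card_compl, Fintype.card_option, Finset.card_singleton,
    Fintype.card_fin, Nat.add_sub_cancel]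

lemma degree_some (hn : 3 ≤ n) (i : Fin n) : (wheel n).degree (some i) = 3 := by
  rw [← card_neighborFinset_eq_degree, neighborFinset_some (by omega)]
  simp [i.add_one_ne_sub_one hn]

lemma card_edgeFinset (hn : 3 ≤ n) : #(wheel n).edgeFinset = 2 * n := by
  have := (wheel n).sum_degrees_eq_twice_card_edges
  simp only [Fintype.sum_option, degree_none, degree_some hn, Finset.sum_const, Finset.card_univ,
    Fintype.card_fin, smul_eq_mul] at this
  omega

lemma lineGraph_degree_spoke (hn : 3 ≤ n) {i : Fin n} (h : s(none, some i) ∈ (wheel n).edgeSet) :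
    (wheel n).lineGraph.degree ⟨s(none, some i), h⟩ = n + 1 := by
  have := degree_lineGraph_mk_add_two h
  rw [degree_none, degree_some hn] at this
  omega

lemma lineGraph_degree_rim (hn : 3 ≤ n) {i j : Fin n}
    (h : s(some i, some j) ∈ (wheel n).edgeSet) :
    (wheel n).lineGraph.degree ⟨s(some i, some j), h⟩ = 4 := by
  have := degree_lineGraph_mk_add_two h
  rw [degree_some hn, degree_some hn] at this
  omega

variable (n) in
def spokes : Finset (wheel n).edgeSet := {e | none ∈ (e : Sym2 (Option (Fin n)))}

lemma lineGraph_degree_of_mem_spokes (hn : 3 ≤ n) {e : (wheel n).edgeSet} (he : e ∈ spokes n) :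
    (wheel n).lineGraph.degree e = n + 1 := by
  obtain ⟨e, hE⟩ := e
  obtain ⟨b, rfl⟩ := Sym2.mem_iff_exists.1 (Finset.mem_filter.1 he).2
  cases b with
  | none => exact absurd hE (wheel n).irrefl
  | some i => exact lineGraph_degree_spoke hn hE

lemma lineGraph_degree_of_notMem_spokes (hn : 3 ≤ n) {e : (wheel n).edgeSet}
    (he : e ∉ spokes n) : (wheel n).lineGraph.degree e = 4 := by
  obtain ⟨e, hE⟩ := e
  induction e using Sym2.ind with
  | _ a b =>
    match a, b with
    | some i, some j => exact lineGraph_degree_rim hn hE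
    | none, _ | some _, none => simp [spokes] at he

lemma card_spokes : #(spokes n) = n :=
  calc #(spokes n) = #((wheel n).incidenceFinset none) := by
        rw [← Finset.card_map (Function.Embedding.subtype _)]
        congr 1
        ext e
        simp [spokes, mem_incidenceFinset, incidenceSet, and_comm]
    _ = n := by rw [card_incidenceFinset_eq_degree, degree_none]

lemma card_compl_spokes (hn : 3 ≤ n) : #(spokes n)ᶜ = n := by
  rw [Finset.card_compl, ← edgeFinset_card, card_edgeFinset hn, card_spokes]
  omega

end Wheel

/-- In the line graph of the wheel `W_{n+1}` (`n ≥ 5`): the `n` spoke edges form a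
clique and each has degree `n + 1`; each of the `n` rim edges has degree `4`;
consequently `cn(L(W_{n+1})) = n` and `cn^c(L(W_{n+1})) = n ^ 2`. -/
theorem wheel_lineGraph_curling (n : ℕ) [NeZero n] (hn : 5 ≤ n) :
    (∀ (i j : Fin n) (hi : s((none : Option (Fin n)), some i) ∈ (wheel n).edgeSet)
        (hj : s((none : Option (Fin n)), some j) ∈ (wheel n).edgeSet), i ≠ j →
        (wheel n).lineGraph.Adj ⟨s(none, some i), hi⟩ ⟨s(none, some j), hj⟩) ∧
    (∀ (i : Fin n) (hi : s((none : Option (Fin n)), some i) ∈ (wheel n).edgeSet),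
        (wheel n).lineGraph.degree ⟨s(none, some i), hi⟩ = n + 1) ∧
    (∀ (i : Fin n) (he : s(some i, some (i + 1)) ∈ (wheel n).edgeSet),
        (wheel n).lineGraph.degree ⟨s(some i, some (i + 1)), he⟩ = 4) ∧
    graphCn (wheel n).lineGraph = n ∧ graphCnc (wheel n).lineGraph = n ^ 2 := by
  have h3 : 3 ≤ n := by omega
  have hspokes := fun e => Wheel.lineGraph_degree_of_mem_spokes (e := e) h3
  have hrims := fun e => Wheel.lineGraph_degree_of_notMem_spokes (e := e) h3
  have hne : n + 1 ≠ 4 := by omega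
  have hpos : (Wheel.spokes n).Nonempty := Finset.card_pos.1 (by rw [Wheel.card_spokes]; omega)
  have hpos' : (Wheel.spokes n)ᶜ.Nonempty :=
    Finset.card_pos.1 (by rw [Wheel.card_compl_spokes h3]; omega)
  refine ⟨fun i j hi hj hij => SimpleGraph.lineGraph_adj_mk_of_ne hi hj (by simpa using hij),
    fun i hi => Wheel.lineGraph_degree_spoke h3 hi, fun i he => Wheel.lineGraph_degree_rim h3 he,
    ?_, ?_⟩
  · rw [graphCn_of_two_degrees _ hspokes hrims hne hpos hpos', Wheel.card_spokes,
      Wheel.card_compl_spokes h3, max_self]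
  · rw [graphCnc_of_two_degrees _ hspokes hrims hne hpos hpos', Wheel.card_spokes,
      Wheel.card_compl_spokes h3, sq]
end

section
/- If G is a connected finite simple graph that is not a tree (i.e., |E| ≥ |V|), then the curling number of the subdivision G' of G equals ε + r, where ε = |E(G)| and r is the number of vertices of degree 2 in G. -/
open Finset

variable {V : Type*} [Fintype V] [DecidableEq V]

/-- Generating relation of the subdivision: each original vertex `u` is joined to the
new vertex corresponding to each edge `e` containing `u`. -/
def subdivRel (G : SimpleGraph V) [DecidableRel G.Adj] :
    V ⊕ G.edgeSet → V ⊕ G.edgeSet → Prop := fun a b =>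
  ∃ (u : V) (e : G.edgeSet), a = Sum.inl u ∧ b = Sum.inr e ∧ u ∈ (e : Sym2 V)

instance (G : SimpleGraph V) [DecidableRel G.Adj] : ∀ a b, Decidable (subdivRel G a b) :=
  fun a b => by unfold subdivRel; infer_instance

/-- The subdivision of `G`: every edge `uv` is replaced by a path of length two
through a new vertex. -/
def subdiv (G : SimpleGraph V) [DecidableRel G.Adj] : SimpleGraph (V ⊕ G.edgeSet) :=
  SimpleGraph.fromRel (subdivRel G)

instance (G : SimpleGraph V) [DecidableRel G.Adj] : DecidableRel (subdiv G).Adj :=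
  fun a b => decidable_of_iff' _ (SimpleGraph.fromRel_adj (subdivRel G) a b)

/-!
In `G'` the original vertices keep their degrees and the `ε` new vertices all have degree `2`,
so degree `2` occurs `ε + r` times, while any other degree occurs at most `|V| ≤ ε` times.
-/

section CurlingNumber

variable {W : Type*} (H : SimpleGraph W) [Fintype W] [DecidableRel H.Adj]

theorem degMult_le_graphCn (d : ℕ) : degMult H d ≤ graphCn H := by
  by_cases hd : ∃ w, H.degree w = d
  · obtain ⟨w, rfl⟩ := hd
    exact Finset.le_sup (Finset.mem_image_of_mem _ (Finset.mem_univ w))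
  · push Not at hd
    simp [degMult, Finset.filter_false_of_mem fun w _ => hd w]

theorem graphCn_le {n : ℕ} (h : ∀ d, degMult H d ≤ n) : graphCn H ≤ n :=
  Finset.sup_le fun d _ => h d

theorem degMult_le_card (d : ℕ) : degMult H d ≤ Fintype.card W :=
  Finset.card_filter_le _ _

end CurlingNumber

namespace SimpleGraph

variable {U : Type*} (G : SimpleGraph U) [DecidableRel G.Adj]

@[simp]
theorem subdiv_adj_inl_inr (u : U) (e : G.edgeSet) :
    (subdiv G).Adj (Sum.inl u) (Sum.inr e) ↔ u ∈ (e : Sym2 U) := by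
  simp [subdiv, subdivRel]

@[simp]
theorem subdiv_adj_inr_inl (u : U) (e : G.edgeSet) :
    (subdiv G).Adj (Sum.inr e) (Sum.inl u) ↔ u ∈ (e : Sym2 U) := by
  rw [adj_comm, subdiv_adj_inl_inr]

@[simp]
theorem subdiv_not_adj_inl_inl (u v : U) : ¬ (subdiv G).Adj (Sum.inl u) (Sum.inl v) := by
  simp [subdiv, subdivRel]

@[simp]
theorem subdiv_not_adj_inr_inr (e f : G.edgeSet) : ¬ (subdiv G).Adj (Sum.inr e) (Sum.inr f) := by
  simp [subdiv, subdivRel]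

variable [Fintype U] [DecidableEq U]

theorem subdiv_neighborFinset_inl (u : U) :
    (subdiv G).neighborFinset (Sum.inl u) =
      ((G.incidenceFinset u).subtype (· ∈ G.edgeSet)).map Function.Embedding.inr := by
  ext (v | e) <;> simp [incidenceSet]

theorem subdiv_degree_inl (u : U) : (subdiv G).degree (Sum.inl u) = G.degree u := by
  rw [← card_neighborFinset_eq_degree, subdiv_neighborFinset_inl, Finset.card_map,
    Finset.card_subtype, Finset.filter_true_of_mem fun e he => G.incidenceSet_subset u
      ((mem_incidenceFinset G u e).1 he), card_incidenceFinset_eq_degree]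

theorem subdiv_degree_inr (e : G.edgeSet) : (subdiv G).degree (Sum.inr e) = 2 := by
  obtain ⟨⟨a, b⟩, he⟩ := e
  have hab : a ≠ b := ((mem_edgeSet G).1 he).ne
  have hnbr : (subdiv G).neighborFinset (Sum.inr ⟨s(a, b), he⟩) = {Sum.inl a, Sum.inl b} := by
    ext (v | f) <;> simp [eq_comm]
  rw [← card_neighborFinset_eq_degree, hnbr, Finset.card_pair (by simpa using hab)]

end SimpleGraph

open SimpleGraph in
theorem degMult_subdiv (G : SimpleGraph V) [DecidableRel G.Adj] (d : ℕ) :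
    degMult (subdiv G) d = degMult G d + if d = 2 then #G.edgeFinset else 0 := by
  unfold degMult
  rw [← Finset.card_toLeft_add_card_toRight]
  congr 1
  · congr 1; ext v; simp [subdiv_degree_inl]
  · split_ifs with h
    · subst h; rw [edgeFinset_card, ← Finset.card_univ]; congr 1; ext e
      simp [subdiv_degree_inr]
    · rw [Finset.card_eq_zero]; ext e; simp [subdiv_degree_inr, Ne.symm h]

theorem graphCn_subdiv_general (G : SimpleGraph V) [DecidableRel G.Adj]
    (hnt : Fintype.card V ≤ G.edgeFinset.card) :
    graphCn (subdiv G) =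
      G.edgeFinset.card + (Finset.univ.filter fun v : V => G.degree v = 2).card := by
  have hdeg2 : degMult (subdiv G) 2 = #G.edgeFinset + degMult G 2 := by
    rw [degMult_subdiv, if_pos rfl, add_comm]
  refine le_antisymm (graphCn_le _ fun d => ?_) (hdeg2 ▸ degMult_le_graphCn _ 2)
  rcases eq_or_ne d 2 with rfl | hd
  · exact hdeg2.le
  · rw [degMult_subdiv, if_neg hd, add_zero]
    exact (degMult_le_card G d).trans (hnt.trans (Nat.le_add_right _ _))

/-- If `G` is connected and not a tree (`|E| ≥ |V|`), then the curling number of the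
subdivision `G'` of `G` equals `ε + r`, where `ε` is the number of edges of `G` and
`r` is the number of vertices of degree `2` in `G`. -/
theorem graphCn_subdiv (G : SimpleGraph V) [DecidableRel G.Adj] (hconn : G.Connected)
    (hnt : Fintype.card V ≤ G.edgeFinset.card) :
    graphCn (subdiv G) =
      G.edgeFinset.card + (Finset.univ.filter fun v : V => G.degree v = 2).card :=
  graphCn_subdiv_general G hnt
end
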